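/- Fix t ∈ T and let K be the stochastic alternating class kernel built from the finite set F = {f_1, …, f_m} of class functions. For every set A ∈ Σ with π(A) > 0 and every f ∈ F, if A ⊆ f_x^{-1}(f_x(B_t^∞)) (where f_x(B_t^∞) is the image of B_t^∞ under f_x), then A ∈ R_t^∞. -/

import Mathlib

open MeasureTheory ProbabilityTheory Filter

universe u v

noncomputable section

/-- The `n`-th iterate of a Markov transition kernel: `kiter K 0` is the identity kernel and
`kiter K (n+1) (s, A) = ∫ K(s', A) (kiter K n)(s, ds')`, so `kiter K n = K^n` for `n ≥ 1`. -/
def kiter {S : Type u} [MeasurableSpace S] (K : Kernel S S) : ℕ → Kernel S S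
  | 0 => Kernel.id
  | n + 1 => K ∘ₖ kiter K n

/-- `K` is `π`-irreducible: from every point, every set of positive `π`-measure is reached
with positive probability after some number `n ≥ 1` of steps. -/
def PiIrreducible {S : Type u} [MeasurableSpace S] (K : Kernel S S) (π : Measure S) : Prop :=
  ∀ s : S, ∀ A : Set S, MeasurableSet A → 0 < π A → ∃ n : ℕ, 1 ≤ n ∧ 0 < kiter K n s A

/-- `π` is a stationary distribution of `K`: `∫ K(s, A) π(ds) = π(A)` for all measurable `A`. -/
def StationaryFor {S : Type u} [MeasurableSpace S] (K : Kernel S S) (π : Measure S) : Prop :=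
  ∀ A : Set S, MeasurableSet A → ∫⁻ s, K s A ∂π = π A

/-- `K` is periodic relative to `π`: there are `d ≥ 2` pairwise disjoint nonempty measurable
sets `E_0, …, E_{d-1}` and a `π`-null measurable set `N` covering `S` such that from `E_i` the
kernel moves to `E_{(i+1) mod d}` with probability one. -/
def PeriodicK {S : Type u} [MeasurableSpace S] (K : Kernel S S) (π : Measure S) : Prop :=
  ∃ d : ℕ, ∃ hd : 2 ≤ d, ∃ E : Fin d → Set S, ∃ N : Set S,
    (∀ i, MeasurableSet (E i)) ∧ MeasurableSet N ∧ (∀ i, (E i).Nonempty) ∧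
    Pairwise (fun i j => Disjoint (E i) (E j)) ∧
    (⋃ i, E i) ∪ N = Set.univ ∧ π N = 0 ∧
    ∀ i : Fin d, ∀ s ∈ E i, K s (E ⟨(i.1 + 1) % d, Nat.mod_lt _ (by omega)⟩) = 1

/-- `K` is aperiodic relative to `π` if it is not periodic. -/
def AperiodicK {S : Type u} [MeasurableSpace S] (K : Kernel S S) (π : Measure S) : Prop :=
  ¬ PeriodicK K π

/-- Total variation norm of a (bounded signed) set function:
`‖λ‖ = sup_{A measurable} λ(A) − inf_{A measurable} λ(A)`. -/
def tvnorm {S : Type u} [MeasurableSpace S] (lam : Set S → ℝ) : ℝ :=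
  (⨆ A : {A : Set S // MeasurableSet A}, lam A.1) - (⨅ A : {A : Set S // MeasurableSet A}, lam A.1)

/-- The iterates of `K` started at `s` converge to `π` in total variation norm:
`lim_{n→∞} ‖K^n(s, ·) − π‖ = 0`. -/
def TVConvergesTo {S : Type u} [MeasurableSpace S] (K : Kernel S S) (π : Measure S) (s : S) : Prop :=
  Tendsto (fun n : ℕ => tvnorm (fun A => (kiter K (n + 1) s A).toReal - (π A).toReal))
    atTop (nhds 0)

/-- The data of the class-kernel setting for a single class function `f` on a probability
space `(T, Σ, π)`: a countable index set `I`, families of measurable spaces `(X i, 𝒳 i)` and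
`(Y i, 𝒴 i)` whose disjoint union forms the generalized product space `C = ⨆ i, X i × Y i`,
an injective two-way measurable class function `f : T → C`, regular conditional probabilities
`v i : X i × 𝒴 i → [0,1]` disintegrating the (conditioned) pushforward `f_*π` on each class,
parameterized Markov transition kernels `K i x` on `(Y i, 𝒴 i)` measurable in `x`, and the
resulting class kernel `Kf` on `(T, Σ)` given by
`Kf(t, A) = (K i x)(y, {y' | ⟨x, y'⟩ ∈ f(A)})` where `f(t) = ⟨i, x, y⟩`. -/
structure ClassKernelData (T : Type u) [MeasurableSpace T] (π : Measure T) where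
  /-- the countable index set -/
  (I : Type v)
  [countI : Countable I]
  /-- the `X`-components of the generalized product space -/
  (X : I → Type v)
  /-- the `Y`-components of the generalized product space -/
  (Y : I → Type v)
  [mX : ∀ i, MeasurableSpace (X i)]
  [mY : ∀ i, MeasurableSpace (Y i)]
  /-- the class function `f : T → C = ⨆ i, X i × Y i` -/
  f : T → Σ i : I, X i × Y i
  f_inj : Function.Injective f
  f_meas : Measurable f
  /-- `f` is two-way measurable: images of measurable sets are measurable -/
  f_image : ∀ A : Set T, MeasurableSet A → MeasurableSet (f '' A)
  /-- the regular conditional probabilities `v i : X i × 𝒴 i → [0,1]` -/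
  v : ∀ i, X i → Measure (Y i)
  v_prob : ∀ i x, IsProbabilityMeasure (v i x)
  v_meas : ∀ i (V : Set (Y i)), MeasurableSet V → Measurable fun x => v i x V
  /-- the disintegration property: for each class `i` of positive `f_*π`-mass,
  `(f_*π)_i(U × V) = ∫_U v_i(x, V) (f_*π)_i(dx × Y_i)` (stated in unnormalized form, which is
  equivalent since the normalizing constant appears identically on both sides) -/
  v_eq : ∀ i : I, 0 < π.map f (Set.range (Sigma.mk i)) →
    ∀ (U : Set (X i)) (V : Set (Y i)), MeasurableSet U → MeasurableSet V →
      (π.map f).comap (Sigma.mk i) (U ×ˢ V)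
        = ∫⁻ x in U, v i x V ∂(((π.map f).comap (Sigma.mk i)).map Prod.fst)
  /-- the parameterized Markov transition kernels `K i x` on `(Y i, 𝒴 i)` -/
  K : ∀ i, X i → Kernel (Y i) (Y i)
  K_markov : ∀ i x, IsMarkovKernel (K i x)
  K_meas : ∀ i (y : Y i) (V : Set (Y i)), MeasurableSet V → Measurable fun x => K i x y V
  /-- the class kernel `Kf` on `(T, Σ)` -/
  Kf : Kernel T T
  Kf_markov : IsMarkovKernel Kf
  /-- the class kernel is given by `Kf(t, A) = (K i x)(y, {y' ∈ Y i | ⟨x, y'⟩ ∈ f(A)})`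
  where `f(t) = ⟨i, x, y⟩` -/
  Kf_eq : ∀ (t : T) (A : Set T), MeasurableSet A → ∀ (i : I) (x : X i) (y : Y i),
    f t = ⟨i, (x, y)⟩ →
      Kf t A = K i x y {y' : Y i | (⟨i, (x, y')⟩ : Σ j : I, X j × Y j) ∈ f '' A}

attribute [instance] ClassKernelData.countI ClassKernelData.mX ClassKernelData.mY

/-- The projection `f_x` of a class function onto the `X`-components. -/
def ClassKernelData.fx {T : Type u} [MeasurableSpace T] {π : Measure T}
    (d : ClassKernelData T π) : T → Σ i : d.I, d.X i :=
  fun t => ⟨(d.f t).1, (d.f t).2.1⟩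

/-- `R_t^∞`: the collection of measurable sets reachable from `t` by the kernel `K` in some
number `n ≥ 1` of steps with positive probability. -/
def Rinf {T : Type u} [MeasurableSpace T] (K : Kernel T T) (t : T) : Set (Set T) :=
  {A | MeasurableSet A ∧ ∃ n : ℕ, 1 ≤ n ∧ 0 < kiter K n t A}

/-- `B_t^∞`: the set of points `t'` such that every measurable set containing `t'` is
reachable from `t` by the kernel `K`. -/
def Binf {T : Type u} [MeasurableSpace T] (K : Kernel T T) (t : T) : Set T :=
  {t' | ∀ A : Set T, MeasurableSet A → t' ∈ A → A ∈ Rinf K t}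

/-- A finite family of class functions connects the probability space `(T, Σ, π)`:
for every measurable `A` and every pair `f, g` in the family, if
`π(f_x⁻¹(f_x(A)) ∩ g_x⁻¹((g_x(A))ᶜ)) = 0` and `π(f_x⁻¹((f_x(A))ᶜ) ∩ g_x⁻¹(g_x(A))) = 0`,
then `π(f_x⁻¹((f_x(A))ᶜ)) = 0` or `π(g_x⁻¹((g_x(A))ᶜ)) = 0`. -/
def Connects {T : Type u} [MeasurableSpace T] (π : Measure T) {m : ℕ}
    (D : Fin m → ClassKernelData.{u, v} T π) : Prop :=
  ∀ A : Set T, MeasurableSet A → ∀ k l : Fin m,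
    π ((D k).fx ⁻¹' ((D k).fx '' A) ∩ (D l).fx ⁻¹' ((D l).fx '' A)ᶜ) = 0 →
    π ((D k).fx ⁻¹' ((D k).fx '' A)ᶜ ∩ (D l).fx ⁻¹' ((D l).fx '' A)) = 0 →
    π ((D k).fx ⁻¹' ((D k).fx '' A)ᶜ) = 0 ∨ π ((D l).fx ⁻¹' ((D l).fx '' A)ᶜ) = 0

/-!
Disintegrating `f_*π` along the classes shows that some fiber `{f_x = ⟨i, x⟩}` meets `A` in a
set of positive `v_i(x, ·)`-measure, and the hypothesis on `A` puts a point `b ∈ B_t^∞` in that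
fiber. Transported by `f⁻¹`, the class kernel on a fiber is a copy of `K_i(x)`, so irreducibility
gives `K_f^n(b, A) > 0`, and `K ≥ p_k K_f` gives `K^n(b, A) > 0`. The measurable set
`{s | K^n(s, A) > 0}` contains `b ∈ B_t^∞`, so it is reached from `t`, and then so is `A`.
-/

section Sigma

variable {ι : Type*} {X : ι → Type*} [∀ i, MeasurableSpace (X i)]

theorem measurableSet_sigma_iff {s : Set (Σ i, X i)} :
    MeasurableSet s ↔ ∀ i, MeasurableSet (Sigma.mk i ⁻¹' s) :=
  MeasurableSpace.measurableSet_iInf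

theorem measurableEmbedding_sigmaMk (i : ι) : MeasurableEmbedding (@Sigma.mk ι X i) where
  injective := sigma_mk_injective
  measurable := fun _ hs => measurableSet_sigma_iff.mp hs i
  measurableSet_image' := fun s hs => by
    refine measurableSet_sigma_iff.mpr fun j => ?_
    by_cases hj : j = i
    · subst hj
      rwa [Set.preimage_image_eq _ sigma_mk_injective]
    · convert MeasurableSet.empty
      ext y
      simp only [Set.mem_preimage, Set.mem_image, Set.mem_empty_iff_false, iff_false]
      rintro ⟨x, -, hx⟩
      exact hj (congrArg Sigma.fst hx).symm

theorem measurable_sigmaMk_prodMk {Y : ι → Type*} [∀ i, MeasurableSpace (Y i)] (i : ι)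
    (x : X i) :
    Measurable fun y : Y i => (⟨i, (x, y)⟩ : Σ j, X j × Y j) :=
  (measurableEmbedding_sigmaMk i).measurable.comp measurable_prodMk_left

theorem MeasureTheory.Measure.exists_pos_comap_sigmaMk [Countable ι] (μ : Measure (Σ i, X i))
    {s : Set (Σ i, X i)} (hs : 0 < μ s) :
    ∃ i, 0 < μ.comap (Sigma.mk i) (Sigma.mk i ⁻¹' s) := by
  by_contra! h
  have hcover : s ⊆ ⋃ i, Sigma.mk i '' (Sigma.mk i ⁻¹' s) := fun c hc =>
    Set.mem_iUnion.mpr ⟨c.1, c.2, hc, rfl⟩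
  refine hs.ne' (measure_mono_null hcover (measure_iUnion_null fun i => ?_))
  rw [← (measurableEmbedding_sigmaMk i).comap_apply]
  exact nonpos_iff_eq_zero.mp (h i)

end Sigma

section Disintegration

variable {α β : Type*} [MeasurableSpace α] [MeasurableSpace β]

theorem MeasureTheory.Measure.eq_compProd_of_apply_prod {ρ : Measure (α × β)}
    [IsFiniteMeasure ρ] {κ : Kernel α β} [IsMarkovKernel κ]
    (h : ∀ U V, MeasurableSet U → MeasurableSet V →
      ρ (U ×ˢ V) = ∫⁻ x in U, κ x V ∂(ρ.map Prod.fst)) :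
    ρ = ρ.map Prod.fst ⊗ₘ κ := by
  refine ext_of_generate_finite _ generateFrom_prod.symm isPiSystem_prod ?_ ?_
  · rintro s ⟨U, hU, V, hV, rfl⟩
    rw [Measure.compProd_apply_prod hU hV]
    exact h U V hU hV
  · rw [← Set.univ_prod_univ, Measure.compProd_apply_prod MeasurableSet.univ MeasurableSet.univ,
      h _ _ MeasurableSet.univ MeasurableSet.univ]

theorem exists_kernel_apply_pos_of_apply_prod {ρ : Measure (α × β)} [IsFiniteMeasure ρ]
    {κ : Kernel α β} [IsMarkovKernel κ]
    (h : ∀ U V, MeasurableSet U → MeasurableSet V →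
      ρ (U ×ˢ V) = ∫⁻ x in U, κ x V ∂(ρ.map Prod.fst))
    {s : Set (α × β)} (hs : MeasurableSet s) (hρs : 0 < ρ s) :
    ∃ x, 0 < κ x (Prod.mk x ⁻¹' s) := by
  rw [Measure.eq_compProd_of_apply_prod h, Measure.compProd_apply hs] at hρs
  by_contra! hκ
  simp [nonpos_iff_eq_zero.mp (hκ _)] at hρs

end Disintegration

section Iterates

variable {S Y : Type*} [MeasurableSpace S] [MeasurableSpace Y]

theorem kiter_add (K : Kernel S S) (a b : ℕ) : kiter K (a + b) = kiter K a ∘ₖ kiter K b := by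
  induction a with
  | zero => rw [Nat.zero_add, kiter, Kernel.id_comp]
  | succ a ih => rw [Nat.add_right_comm, kiter, ih, kiter, Kernel.comp_assoc]

theorem pow_mul_kiter_apply_le {K K' : Kernel S S} {c : ENNReal}
    (h : ∀ s (A : Set S), MeasurableSet A → c * K' s A ≤ K s A) (n : ℕ) (s : S) {A : Set S}
    (hA : MeasurableSet A) : c ^ n * kiter K' n s A ≤ kiter K n s A := by
  induction n generalizing s A with
  | zero => simp [kiter]
  | succ n ih =>
    have hle : c ^ n • kiter K' n s ≤ kiter K n s :=
      Measure.le_iff.mpr fun B hB => ih s hB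
    calc c ^ (n + 1) * kiter K' (n + 1) s A
        = c ^ n * (c * ∫⁻ u, K' u A ∂(kiter K' n s)) := by
          rw [kiter, Kernel.comp_apply' _ _ _ hA, pow_succ, mul_assoc]
      _ = ∫⁻ u, c * K' u A ∂(c ^ n • kiter K' n s) := by
          rw [lintegral_smul_measure, lintegral_const_mul _ (K'.measurable_coe hA), smul_eq_mul]
      _ ≤ ∫⁻ u, K u A ∂(kiter K n s) := lintegral_mono' hle fun u => h u A hA
      _ = kiter K (n + 1) s A := by rw [kiter, Kernel.comp_apply' _ _ _ hA]

theorem kiter_apply_compl_eq_zero {η : Kernel Y Y} {G : Set Y} (hG : MeasurableSet G)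
    (hηG : ∀ y ∈ G, η y Gᶜ = 0) (n : ℕ) {y : Y} (hy : y ∈ G) :
    kiter η n y Gᶜ = 0 := by
  induction n with
  | zero =>
    rw [kiter, Kernel.id_apply, Measure.dirac_apply' _ hG.compl]
    exact Set.indicator_of_notMem (Set.notMem_compl_iff.mpr hy) _
  | succ n ih =>
    rw [kiter, Kernel.comp_apply' _ _ _ hG.compl]
    refine (lintegral_congr_ae ?_).trans lintegral_zero
    filter_upwards [ae_iff.mpr ih] with y' hy' using hηG y' hy'

theorem kiter_apply_eq_map {κ : Kernel S S} {η : Kernel Y Y} {g : Y → S} (hg : Measurable g)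
    {G : Set Y} (hG : MeasurableSet G) (hηG : ∀ y ∈ G, η y Gᶜ = 0)
    (hκ : ∀ y ∈ G, κ (g y) = (η y).map g) (n : ℕ) {y : Y} (hy : y ∈ G) :
    kiter κ n (g y) = (kiter η n y).map g := by
  induction n with
  | zero => rw [kiter, kiter, Kernel.id_apply, Kernel.id_apply, Measure.map_dirac' hg]
  | succ n ih =>
    ext A hA
    calc kiter κ (n + 1) (g y) A
        = ∫⁻ y', κ (g y') A ∂(kiter η n y) := by
          rw [kiter, Kernel.comp_apply' _ _ _ hA, ih, lintegral_map (κ.measurable_coe hA) hg]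
      _ = ∫⁻ y', η y' (g ⁻¹' A) ∂(kiter η n y) := by
          refine lintegral_congr_ae ?_
          filter_upwards [ae_iff.mpr (kiter_apply_compl_eq_zero hG hηG n hy)] with y' hy'
          rw [hκ y' hy', Measure.map_apply hg hA]
      _ = (kiter η (n + 1) y).map g A := by
          rw [Measure.map_apply hg hA, kiter, Kernel.comp_apply' _ _ _ (hg hA)]

end Iterates

theorem mem_Rinf_of_kiter_pos {T : Type*} [MeasurableSpace T] {K : Kernel T T} {t b : T}
    (hb : b ∈ Binf K t) {A : Set T} (hA : MeasurableSet A) {n : ℕ}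
    (hn : 0 < kiter K n b A) : A ∈ Rinf K t := by
  have hM : MeasurableSet {s | 0 < kiter K n s A} :=
    measurableSet_lt measurable_const ((kiter K n).measurable_coe hA)
  obtain ⟨-, n₁, hn₁, hreach⟩ := hb _ hM hn
  refine ⟨hA, n + n₁, by omega, ?_⟩
  rw [kiter_add, Kernel.comp_apply' _ _ _ hA,
    lintegral_pos_iff_support ((kiter K n).measurable_coe hA)]
  exact hreach.trans_le (measure_mono fun s hs => hs.ne')

namespace ClassKernelData

variable {T : Type u} [MeasurableSpace T] {π : Measure T} (d : ClassKernelData.{u, v} T π)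

theorem measurableEmbedding_f : MeasurableEmbedding d.f := ⟨d.f_inj, d.f_meas, d.f_image⟩

def vKernel (i : d.I) : Kernel (d.X i) (d.Y i) :=
  ⟨d.v i, Measure.measurable_of_measurable_coe _ fun _ hV => d.v_meas i _ hV⟩

instance (i : d.I) : IsMarkovKernel (d.vKernel i) := ⟨d.v_prob i⟩

def slice (i : d.I) (x : d.X i) (A : Set T) : Set (d.Y i) :=
  {y | (⟨i, (x, y)⟩ : Σ j : d.I, d.X j × d.Y j) ∈ d.f '' A}

variable {d}

theorem measurableSet_slice (i : d.I) (x : d.X i) {A : Set T} (hA : MeasurableSet A) :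
    MeasurableSet (d.slice i x A) :=
  measurable_sigmaMk_prodMk i x (d.f_image A hA)

theorem mem_slice_iff {i : d.I} {x : d.X i} {y : d.Y i} {b : T} (hb : d.f b = ⟨i, (x, y)⟩)
    {A : Set T} : y ∈ d.slice i x A ↔ b ∈ A := by
  show _ ∈ d.f '' A ↔ _
  rw [← hb, d.f_inj.mem_set_image]

theorem exists_f_eq_of_fx_eq {b : T} {i : d.I} {x : d.X i} (hb : d.fx b = ⟨i, x⟩) :
    ∃ y, d.f b = ⟨i, (x, y)⟩ := by
  rcases hf : d.f b with ⟨j, xj, y⟩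
  rw [fx, hf] at hb
  cases hb
  exact ⟨y, rfl⟩

theorem exists_v_slice_pos [IsFiniteMeasure π] {A : Set T} (hA : MeasurableSet A)
    (hpos : 0 < π A) : ∃ i x, 0 < d.v i x (d.slice i x A) := by
  have himage : 0 < π.map d.f (d.f '' A) := by
    rwa [d.measurableEmbedding_f.map_apply, Set.preimage_image_eq _ d.f_inj]
  obtain ⟨i, hi⟩ := Measure.exists_pos_comap_sigmaMk _ himage
  have hclass : 0 < π.map d.f (Set.range (Sigma.mk i)) := by
    refine hi.trans_le ?_
    rw [(measurableEmbedding_sigmaMk i).comap_apply, Set.image_preimage_eq_inter_range]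
    exact measure_mono Set.inter_subset_right
  exact ⟨i, exists_kernel_apply_pos_of_apply_prod (κ := d.vKernel i) (d.v_eq i hclass)
    ((measurableEmbedding_sigmaMk i).measurable (d.f_image A hA)) hi⟩

theorem K_apply_compl_slice_univ {i : d.I} {x : d.X i} {y : d.Y i}
    (hy : y ∈ d.slice i x Set.univ) : d.K i x y (d.slice i x Set.univ)ᶜ = 0 := by
  have := d.Kf_markov
  have := d.K_markov i x
  obtain ⟨b, -, hb⟩ := hy
  rw [prob_compl_eq_zero_iff (measurableSet_slice i x MeasurableSet.univ), slice,
    ← d.Kf_eq b _ MeasurableSet.univ i x y hb, measure_univ]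

section FiberPoint

variable [Nonempty T]

/-- Junk value unless `y ∈ d.slice i x Set.univ`. -/
def fiberPoint (i : d.I) (x : d.X i) (y : d.Y i) : T :=
  d.measurableEmbedding_f.invFun ⟨i, (x, y)⟩

theorem measurable_fiberPoint (i : d.I) (x : d.X i) : Measurable (d.fiberPoint i x) :=
  d.measurableEmbedding_f.measurable_invFun.comp (measurable_sigmaMk_prodMk i x)

theorem fiberPoint_eq {i : d.I} {x : d.X i} {y : d.Y i} {b : T} (hb : d.f b = ⟨i, (x, y)⟩) :
    d.fiberPoint i x y = b := by
  rw [fiberPoint, ← hb, d.measurableEmbedding_f.leftInverse_invFun]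

theorem f_fiberPoint {i : d.I} {x : d.X i} {y : d.Y i} (hy : y ∈ d.slice i x Set.univ) :
    d.f (d.fiberPoint i x y) = ⟨i, (x, y)⟩ := by
  obtain ⟨b, -, hb⟩ := hy
  rw [fiberPoint_eq hb, hb]

theorem measure_preimage_fiberPoint {i : d.I} {x : d.X i} {μ : Measure (d.Y i)}
    (hμ : μ (d.slice i x Set.univ)ᶜ = 0) (A : Set T) :
    μ (d.fiberPoint i x ⁻¹' A) = μ (d.slice i x A) := by
  refine measure_congr ?_
  filter_upwards [ae_iff.mpr hμ] with y hy
  exact propext (mem_slice_iff (f_fiberPoint hy)).symm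

theorem Kf_fiberPoint {i : d.I} {x : d.X i} {y : d.Y i} (hy : y ∈ d.slice i x Set.univ) :
    d.Kf (d.fiberPoint i x y) = (d.K i x y).map (d.fiberPoint i x) := by
  ext A hA
  rw [Measure.map_apply (measurable_fiberPoint i x) hA,
    measure_preimage_fiberPoint (K_apply_compl_slice_univ hy),
    d.Kf_eq _ A hA i x y (f_fiberPoint hy), slice]

end FiberPoint

theorem kiter_Kf_apply {i : d.I} {x : d.X i} {y : d.Y i} {b : T} (hb : d.f b = ⟨i, (x, y)⟩)
    (n : ℕ) {A : Set T} (hA : MeasurableSet A) :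
    kiter d.Kf n b A = kiter (d.K i x) n y (d.slice i x A) := by
  have : Nonempty T := ⟨b⟩
  have hy : y ∈ d.slice i x Set.univ := ⟨b, Set.mem_univ b, hb⟩
  have hG := measurableSet_slice i x MeasurableSet.univ
  rw [← fiberPoint_eq hb, kiter_apply_eq_map (measurable_fiberPoint i x) hG
      (fun _ => K_apply_compl_slice_univ) (fun _ => Kf_fiberPoint) n hy,
    Measure.map_apply (measurable_fiberPoint i x) hA, measure_preimage_fiberPoint
      (kiter_apply_compl_eq_zero hG (fun _ => K_apply_compl_slice_univ) n hy)]

end ClassKernelData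

theorem stmt5_general {T : Type u} [MeasurableSpace T] (π : Measure T) [IsProbabilityMeasure π]
    {m : ℕ} (D : Fin m → ClassKernelData.{u, v} T π)
    (hirr : ∀ k i x, PiIrreducible ((D k).K i x) ((D k).v i x))
    (p : Fin m → ENNReal) (hp : ∀ k, 0 < p k ∧ p k < 1)
    (K : Kernel T T)
    (hK : ∀ (t : T) (A : Set T), MeasurableSet A → K t A = ∑ k, p k * (D k).Kf t A)
    (t : T) (A : Set T) (hA : MeasurableSet A) (hpos : 0 < π A) (k : Fin m)
    (hsub : A ⊆ (D k).fx ⁻¹' ((D k).fx '' Binf K t)) :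
    A ∈ Rinf K t := by
  obtain ⟨i, x, hx⟩ := (D k).exists_v_slice_pos hA hpos
  obtain ⟨y₀, a, haA, ha⟩ := nonempty_of_measure_ne_zero hx.ne'
  obtain ⟨b, hbB, hba⟩ := hsub haA
  have hfx : (D k).fx b = ⟨i, x⟩ := by rw [hba, ClassKernelData.fx, ha]
  obtain ⟨y, hb⟩ := ClassKernelData.exists_f_eq_of_fx_eq hfx
  obtain ⟨n, -, hn⟩ := hirr k i x y _ (ClassKernelData.measurableSet_slice i x hA) hx
  have hKf : 0 < kiter (D k).Kf n b A := by rwa [(D k).kiter_Kf_apply hb n hA]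
  have hdom : ∀ s (B : Set T), MeasurableSet B → p k * (D k).Kf s B ≤ K s B := fun s B hB =>
    (hK s B hB).symm ▸ Finset.single_le_sum (f := fun l => p l * (D l).Kf s B)
      (fun _ _ => zero_le) (Finset.mem_univ k)
  exact mem_Rinf_of_kiter_pos hbB hA <|
    (ENNReal.mul_pos (pow_ne_zero n (hp k).1.ne') hKf.ne').trans_le
      (pow_mul_kiter_apply_le hdom n b hA)

/-- Fix `t ∈ T` and let `K` be the stochastic alternating class kernel built from the finite
family `D` of class functions with weights `p`. For every measurable `A` with `π(A) > 0` and
every member `f = (D k).f` of the family: if `A ⊆ f_x⁻¹(f_x(B_t^∞))`, then `A ∈ R_t^∞`. -/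
theorem stmt5 {T : Type u} [MeasurableSpace T] (π : Measure T) [IsProbabilityMeasure π]
    {m : ℕ} (D : Fin m → ClassKernelData.{u, v} T π)
    (hirr : ∀ k i x, PiIrreducible ((D k).K i x) ((D k).v i x))
    (haper : ∀ k i x, AperiodicK ((D k).K i x) ((D k).v i x))
    (hstat : ∀ k i x, StationaryFor ((D k).K i x) ((D k).v i x))
    (p : Fin m → ENNReal) (hp : ∀ k, 0 < p k ∧ p k < 1) (hpsum : ∑ k, p k = 1)
    (K : Kernel T T) [IsMarkovKernel K]
    (hK : ∀ (t : T) (A : Set T), MeasurableSet A → K t A = ∑ k, p k * (D k).Kf t A)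
    (t : T) (A : Set T) (hA : MeasurableSet A) (hpos : 0 < π A) (k : Fin m)
    (hsub : A ⊆ (D k).fx ⁻¹' ((D k).fx '' Binf K t)) :
    A ∈ Rinf K t :=
  stmt5_general π D hirr p hp K hK t A hA hpos k hsub
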